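/- Molecules form a bounded subset of H¹_z(X): for every α > 0 there is a constant C, depending only on α and the doubling constant C_D, such that every molecule m with parameter α associated to a ball Q ⊆ X belongs to H¹_z(X) with ‖m‖_{H¹_z(X)} ≤ C. -/

import Mathlib

/-!
Let `S_k = 2^{k+1}Q ∩ X` for `k ≥ 1`, `S_0 = ∅`, and let `A_k` be `m · 1_{S_k}` minus its mean
over `S_k`. Each `A_k` has mean zero, and `‖m · 1_X - A_k‖₁ ≤ 2 ∫_{X ∖ S_k} |m|`: since
`∫_X m = 0`, the integral of `m` over `S_k` is minus its integral over `X ∖ S_k`. By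
Cauchy–Schwarz on each annulus, `∫_{B_j} |m| ≤ 2^{-jα}`, so this tail is `O(2^{-kα})` and the
telescoping series `Σ_k (A_{k+1} - A_k)` converges to `m · 1_X` in `L¹`. The term
`A_{k+1} - A_k` lives in `2^{k+2}Q`, has mean zero, and its `L²` norm is controlled by the
molecule bound on `B_{k+1}` and the two means; the doubling property, together with
`ν(2^jQ) ≤ 2 ν(2^jQ ∩ X)` (the centre of `Q` lies in `X`), turns these into
`K(α, C_D) 2^{-(k+1)α} ν(2^{k+2}Q)^{-1/2}`. So `A_{k+1} - A_k` is `K 2^{-(k+1)α}` times a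
`(1,2)`-atom, and the geometric series of coefficients bounds the norm.
-/

open MeasureTheory Metric Filter Set

noncomputable section

/-- The parabolic quasi-distance on `ℝ × E`. -/
def pdist {E : Type*} [MetricSpace E] (p q : ℝ × E) : ℝ :=
  max (Real.sqrt |p.1 - q.1|) (dist p.2 q.2)

/-- The open parabolic ball in `N = ℝ × E`. -/
def pball {E : Type*} [MetricSpace E] (c : ℝ × E) (r : ℝ) : Set (ℝ × E) :=
  {p | pdist p c < r}

/-- The upper half space `X = (0,∞) × E` of `N = ℝ × E`. -/
def Xset (E : Type*) : Set (ℝ × E) := {p | 0 < p.1}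

/-- The product measure `ν = Lebesgue ⊗ μ` on `N = ℝ × E`. -/
def pmeas {E : Type*} [MeasurableSpace E] (μ : Measure E) : Measure (ℝ × E) :=
  (volume : Measure ℝ).prod μ

/-- A `(1,2)`-atom on `N`: supported in a parabolic ball `Q`, mean value zero, and
`‖a‖_{L²(ν)} ≤ ν(Q)^{-1/2}`. -/
def IsAtom12 {E : Type*} [MetricSpace E] [MeasurableSpace E]
    (μ : Measure E) (a : ℝ × E → ℝ) : Prop :=
  ∃ (c : ℝ × E) (r : ℝ), 0 < r ∧ Function.support a ⊆ pball c r ∧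
    Integrable a (pmeas μ) ∧ (∫ p, a p ∂(pmeas μ)) = 0 ∧
    eLpNorm a 2 (pmeas μ) ≤ (pmeas μ (pball c r)) ^ (-(1:ℝ)/2)

/-- `f = Σ λ_i a_i` with convergence in `L¹(ρ)`. -/
def HasL1Decomp {E : Type*} [MeasurableSpace E] (ρ : Measure (ℝ × E))
    (f : ℝ × E → ℝ) (lam : ℕ → ℝ) (a : ℕ → ℝ × E → ℝ) : Prop :=
  Summable (fun i => |lam i|) ∧
  Tendsto (fun k => eLpNorm (fun p => f p - ∑ i ∈ Finset.range k, lam i * a i p) 1 ρ)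
    atTop (nhds 0)

/-- Membership in the atomic Hardy space `H¹(N)`. -/
def MemH1 {E : Type*} [MetricSpace E] [MeasurableSpace E]
    (μ : Measure E) (f : ℝ × E → ℝ) : Prop :=
  Integrable f (pmeas μ) ∧
  ∃ (lam : ℕ → ℝ) (a : ℕ → ℝ × E → ℝ), (∀ i, IsAtom12 μ (a i)) ∧
    HasL1Decomp (pmeas μ) f lam a

/-- The `H¹(N)` norm: infimum of `Σ |λ_i|` over all atomic decompositions. -/
def H1norm {E : Type*} [MetricSpace E] [MeasurableSpace E]
    (μ : Measure E) (f : ℝ × E → ℝ) : ℝ :=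
  sInf {c | ∃ (lam : ℕ → ℝ) (a : ℕ → ℝ × E → ℝ), (∀ i, IsAtom12 μ (a i)) ∧
    HasL1Decomp (pmeas μ) f lam a ∧ c = ∑' i, |lam i|}

/-- Membership in `H¹_r(X)`: `f ∈ L¹(X,ν)` is the restriction to `X` of some `F ∈ H¹(N)`. -/
def MemH1r {E : Type*} [MetricSpace E] [MeasurableSpace E]
    (μ : Measure E) (f : ℝ × E → ℝ) : Prop :=
  IntegrableOn f (Xset E) (pmeas μ) ∧
  ∃ F : ℝ × E → ℝ, MemH1 μ F ∧ F =ᵐ[(pmeas μ).restrict (Xset E)] f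

/-- The quotient norm on `H¹_r(X)`. -/
def H1rnorm {E : Type*} [MetricSpace E] [MeasurableSpace E]
    (μ : Measure E) (f : ℝ × E → ℝ) : ℝ :=
  sInf {c | ∃ F : ℝ × E → ℝ, MemH1 μ F ∧ F =ᵐ[(pmeas μ).restrict (Xset E)] f ∧
    c = H1norm μ F}

/-- Membership in `H¹_z(X)`: the extension of `f` by zero belongs to `H¹(N)`. -/
def MemH1z {E : Type*} [MetricSpace E] [MeasurableSpace E]
    (μ : Measure E) (f : ℝ × E → ℝ) : Prop :=
  IntegrableOn f (Xset E) (pmeas μ) ∧ MemH1 μ ((Xset E).indicator f)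

/-- The `H¹_z(X)` norm: the `H¹(N)` norm of the zero extension. -/
def H1znorm {E : Type*} [MetricSpace E] [MeasurableSpace E]
    (μ : Measure E) (f : ℝ × E → ℝ) : ℝ :=
  H1norm μ ((Xset E).indicator f)

/-- `μ` is doubling with constant `C_D`, with all balls of positive finite measure. -/
def DoublingWith {E : Type*} [MetricSpace E] [MeasurableSpace E]
    (μ : Measure E) (C_D : ℝ) : Prop :=
  (∀ (x : E) (r : ℝ), 0 < r → 0 < μ (ball x r) ∧ μ (ball x r) < ⊤) ∧
  (∀ (x : E) (r : ℝ), 0 < r → μ (ball x (2 * r)) ≤ ENNReal.ofReal C_D * μ (ball x r))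

/-- The annular regions `B_j(Q)` attached to a parabolic ball `Q = pball c r`:
`B_1(Q) = 4Q ∩ X` and `B_j(Q) = (2^{j+1}Q ∖ 2^jQ) ∩ X` for `j ≥ 2`. -/
def molBall {E : Type*} [MetricSpace E] (c : ℝ × E) (r : ℝ) (j : ℕ) : Set (ℝ × E) :=
  if j = 1 then pball c (4 * r) ∩ Xset E
  else (pball c (2 ^ (j + 1) * r) \ pball c (2 ^ j * r)) ∩ Xset E

/-- A molecule with parameter `α` associated to a ball `Q = pball c r ⊆ X`:
`∫_X m dν = 0` and `‖m‖_{L²(B_j(Q))} ≤ 2^{−jα} ν(2^{j+1}Q ∩ X)^{−1/2}` for all `j ≥ 1`. -/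
def IsMolecule {E : Type*} [MetricSpace E] [MeasurableSpace E]
    (μ : Measure E) (α : ℝ) (c : ℝ × E) (r : ℝ) (m : ℝ × E → ℝ) : Prop :=
  0 < r ∧ pball c r ⊆ Xset E ∧
  IntegrableOn m (Xset E) (pmeas μ) ∧
  (∫ p in Xset E, m p ∂(pmeas μ)) = 0 ∧
  ∀ j : ℕ, 1 ≤ j →
    eLpNorm m 2 ((pmeas μ).restrict (molBall c r j)) ≤
      ENNReal.ofReal ((2:ℝ) ^ (-(j:ℝ) * α)) *
        (pmeas μ (pball c (2 ^ (j + 1) * r) ∩ Xset E)) ^ (-(1:ℝ)/2)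

open scoped ENNReal

lemma rpow_neg_half_le_of_le_mul {a b : ℝ≥0∞} {K : ℝ} (hK : 0 < K)
    (h : b ≤ ENNReal.ofReal K * a) :
    a ^ (-(1:ℝ)/2) ≤ ENNReal.ofReal (√K) * b ^ (-(1:ℝ)/2) := by
  have hsqrt : ENNReal.ofReal K ^ ((1:ℝ)/2) = ENNReal.ofReal (√K) := by
    rw [Real.sqrt_eq_rpow, ENNReal.ofReal_rpow_of_nonneg hK.le (by norm_num)]
  have hK0 : ENNReal.ofReal (√K) ≠ 0 := by simpa using hK
  have hb : b ^ ((1:ℝ)/2) ≤ ENNReal.ofReal (√K) * a ^ ((1:ℝ)/2) := by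
    rw [← hsqrt, ← ENNReal.mul_rpow_of_nonneg _ _ (by norm_num)]
    exact ENNReal.rpow_le_rpow h (by norm_num)
  rw [neg_div, ENNReal.rpow_neg, ENNReal.rpow_neg]
  calc (a ^ ((1:ℝ)/2))⁻¹
      = ENNReal.ofReal (√K) * (ENNReal.ofReal (√K) * a ^ ((1:ℝ)/2))⁻¹ := by
        rw [ENNReal.mul_inv (Or.inl hK0) (Or.inl ENNReal.ofReal_ne_top), ← mul_assoc,
          ENNReal.mul_inv_cancel hK0 ENNReal.ofReal_ne_top, one_mul]
    _ ≤ ENNReal.ofReal (√K) * (b ^ ((1:ℝ)/2))⁻¹ := by gcongr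

lemma rpow_neg_half_mul_rpow_half_le_one (x : ℝ≥0∞) :
    x ^ (-(1:ℝ)/2) * x ^ ((1:ℝ)/2) ≤ 1 := by
  rw [neg_div, ENNReal.rpow_neg]
  exact ENNReal.inv_mul_le_one _

lemma tsum_ofReal_geometric_tail {q : ℝ} (hq0 : 0 ≤ q) (hq1 : q < 1) (k : ℕ) :
    ∑' n, ENNReal.ofReal (q ^ (k + n)) = ENNReal.ofReal (q ^ k / (1 - q)) := by
  simp_rw [pow_add]
  rw [← ENNReal.ofReal_tsum_of_nonneg (fun n => by positivity)
    ((summable_geometric_of_lt_one hq0 hq1).mul_left _), tsum_mul_left,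
    tsum_geometric_of_lt_one hq0 hq1, div_eq_mul_inv]

lemma Monotone.exists_mem_succ_sdiff {α : Type*} {S : ℕ → Set α} (hS : Monotone S) {x : α}
    {k n : ℕ} (hn : x ∈ S n) (hk : x ∉ S k) : ∃ j, k ≤ j ∧ x ∈ S (j + 1) \ S j := by
  induction n with
  | zero => exact absurd (hS (Nat.zero_le k) hn) hk
  | succ n ih =>
    by_cases hxn : x ∈ S n
    · exact ih hxn
    · refine ⟨n, ?_, hn, hxn⟩
      by_contra! hnk
      exact hk (hS hnk hn)

section Centering

variable {α : Type*} [MeasurableSpace α] {ν : Measure α} {s t X : Set α} {f : α → ℝ}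

def centeredIndicator (ν : Measure α) (s : Set α) (f : α → ℝ) : α → ℝ :=
  s.indicator fun x => f x - ⨍ y in s, f y ∂ν

lemma support_centeredIndicator_subset : Function.support (centeredIndicator ν s f) ⊆ s :=
  support_indicator_subset

lemma integral_centeredIndicator (hs : MeasurableSet s) (hνs : ν s ≠ ∞) :
    ∫ x, centeredIndicator ν s f x ∂ν = 0 := by
  rw [centeredIndicator, integral_indicator hs, setAverage_sub_setAverage hνs]

lemma integrable_centeredIndicator (hs : MeasurableSet s) (hνs : ν s ≠ ∞)
    (hf : IntegrableOn f s ν) : Integrable (centeredIndicator ν s f) ν :=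
  (hf.sub (integrableOn_const hνs)).integrable_indicator hs

lemma eLpNorm_indicator_setAverage_le (p : ℝ≥0∞) :
    eLpNorm (s.indicator fun _ => ⨍ y in s, f y ∂ν) p ν ≤
      ‖∫ y in s, f y ∂ν‖ₑ * ν s ^ (1 / p.toReal - 1) := by
  refine (eLpNorm_indicator_const_le _ p).trans ?_
  rw [setAverage_eq, smul_eq_mul, enorm_mul]
  rcases eq_or_ne (ν s) 0 with h0 | h0
  · simp [measureReal_def, h0]
  rcases eq_or_ne (ν s) ∞ with htop | htop
  · simp [measureReal_def, htop]
  rw [measureReal_def, ← ofReal_norm, Real.norm_eq_abs, abs_inv,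
    abs_of_nonneg ENNReal.toReal_nonneg, ENNReal.ofReal_inv_of_pos (ENNReal.toReal_pos h0 htop),
    ENNReal.ofReal_toReal htop, sub_eq_add_neg, ENNReal.rpow_add _ _ h0 htop,
    ENNReal.rpow_neg_one]
  exact le_of_eq (by ring)

lemma enorm_setIntegral_le_of_setIntegral_eq_zero (hs : MeasurableSet s) (hsX : s ⊆ X)
    (hf : IntegrableOn f X ν) (h0 : ∫ x in X, f x ∂ν = 0) :
    ‖∫ x in s, f x ∂ν‖ₑ ≤ ∫⁻ x in X \ s, ‖f x‖ₑ ∂ν := by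
  have h : ∫ x in X \ s, f x ∂ν = -∫ x in s, f x ∂ν := by
    rw [setIntegral_sdiff hs hf hsX, h0, zero_sub]
  rw [← enorm_neg, ← h]
  exact enorm_integral_le_lintegral_enorm _

lemma eLpNorm_indicator_sub_centeredIndicator_le (hs : MeasurableSet s) (hX : MeasurableSet X)
    (hsX : s ⊆ X) (hf : IntegrableOn f X ν) (h0 : ∫ x in X, f x ∂ν = 0) :
    eLpNorm (X.indicator f - centeredIndicator ν s f) 1 ν ≤
      2 * ∫⁻ x in X \ s, ‖f x‖ₑ ∂ν := by
  have hsplit : X.indicator f - centeredIndicator ν s f =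
      (X \ s).indicator f + s.indicator fun _ => ⨍ y in s, f y ∂ν := by
    ext x
    by_cases hxs : x ∈ s
    · simp [centeredIndicator, hxs, hsX hxs]
    · by_cases hxX : x ∈ X <;> simp [centeredIndicator, hxs, hxX]
  have hdiff : eLpNorm ((X \ s).indicator f) 1 ν = ∫⁻ x in X \ s, ‖f x‖ₑ ∂ν := by
    rw [eLpNorm_indicator_eq_eLpNorm_restrict (hX.diff hs), eLpNorm_one_eq_lintegral_enorm]
  have havg :
      eLpNorm (s.indicator fun _ => ⨍ y in s, f y ∂ν) 1 ν ≤ ∫⁻ x in X \ s, ‖f x‖ₑ ∂ν := by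
    refine (eLpNorm_indicator_setAverage_le 1).trans ?_
    simpa using enorm_setIntegral_le_of_setIntegral_eq_zero hs hsX hf h0
  rw [hsplit, two_mul]
  refine (eLpNorm_add_le ?_ (aestronglyMeasurable_const.indicator hs) le_rfl).trans
    (add_le_add hdiff.le havg)
  exact ((hf.mono_set sdiff_subset).integrable_indicator (hX.diff hs)).aestronglyMeasurable

lemma eLpNorm_centeredIndicator_sub_le (hs : MeasurableSet s) (ht : MeasurableSet t)
    (hst : s ⊆ t) (hf : IntegrableOn f t ν) :
    eLpNorm (centeredIndicator ν t f - centeredIndicator ν s f) 2 ν ≤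
      eLpNorm f 2 (ν.restrict (t \ s)) + ‖∫ x in t, f x ∂ν‖ₑ * ν t ^ (-(1:ℝ)/2) +
        ‖∫ x in s, f x ∂ν‖ₑ * ν s ^ (-(1:ℝ)/2) := by
  have hsplit : centeredIndicator ν t f - centeredIndicator ν s f =
      (t \ s).indicator f - (t.indicator fun _ => ⨍ y in t, f y ∂ν) +
        s.indicator fun _ => ⨍ y in s, f y ∂ν := by
    ext x
    by_cases hxs : x ∈ s
    · simp [centeredIndicator, hxs, hst hxs, neg_add_eq_sub]
    · by_cases hxt : x ∈ t <;> simp [centeredIndicator, hxs, hxt]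
  have hexp : 1 / (2 : ℝ≥0∞).toReal - 1 = -(1:ℝ)/2 := by norm_num
  have hdiff : AEStronglyMeasurable ((t \ s).indicator f) ν :=
    ((hf.mono_set sdiff_subset).integrable_indicator (ht.diff hs)).aestronglyMeasurable
  rw [hsplit]
  refine (eLpNorm_add_le (hdiff.sub (aestronglyMeasurable_const.indicator ht))
    (aestronglyMeasurable_const.indicator hs) one_le_two).trans (add_le_add ?_ ?_)
  · refine (eLpNorm_sub_le hdiff (aestronglyMeasurable_const.indicator ht) one_le_two).trans
      (add_le_add (le_of_eq ?_) ?_)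
    · exact eLpNorm_indicator_eq_eLpNorm_restrict (ht.diff hs)
    · simpa only [hexp] using eLpNorm_indicator_setAverage_le (ν := ν) (s := t) (f := f) 2
  · simpa only [hexp] using eLpNorm_indicator_setAverage_le (ν := ν) (s := s) (f := f) 2

end Centering

lemma measurableSet_Xset {E : Type*} [MeasurableSpace E] : MeasurableSet (Xset E) :=
  measurable_fst measurableSet_Ioi

section ParabolicBalls

variable {E : Type*} [MetricSpace E]

lemma pball_eq_prod (c : ℝ × E) {ρ : ℝ} (hρ : 0 < ρ) :
    pball c ρ = Ioo (c.1 - ρ ^ 2) (c.1 + ρ ^ 2) ×ˢ ball c.2 ρ := by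
  ext p
  simp only [pball, pdist, mem_ofPred_eq, max_lt_iff, mem_prod, mem_Ioo, mem_ball,
    Real.sqrt_lt' hρ, abs_sub_lt_iff]
  constructor <;> rintro ⟨⟨h1, h2⟩, h3⟩ <;> exact ⟨⟨by linarith, by linarith⟩, h3⟩

lemma mem_pball_self (c : ℝ × E) {ρ : ℝ} (hρ : 0 < ρ) : c ∈ pball c ρ := by
  simpa [pball, pdist] using hρ

lemma pball_mono (c : ℝ × E) {ρ₁ ρ₂ : ℝ} (h : ρ₁ ≤ ρ₂) : pball c ρ₁ ⊆ pball c ρ₂ :=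
  fun _ hp => lt_of_lt_of_le hp h

lemma measurableSet_pball [MeasurableSpace E] [OpensMeasurableSpace E] (c : ℝ × E) {ρ : ℝ}
    (hρ : 0 < ρ) : MeasurableSet (pball c ρ) := by
  rw [pball_eq_prod c hρ]
  exact measurableSet_Ioo.prod measurableSet_ball

lemma DoublingWith.sigmaFinite [MeasurableSpace E] {μ : Measure E} {C_D : ℝ}
    (hD : DoublingWith μ C_D) (x₀ : E) : SigmaFinite μ := by
  refine ⟨⟨⟨fun n => ball x₀ (n + 1), fun _ => trivial,
    fun n => (hD.1 x₀ (n + 1) (by positivity)).2, ?_⟩⟩⟩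
  refine iUnion_eq_univ_iff.2 fun x => ?_
  obtain ⟨n, hn⟩ := exists_nat_gt (dist x x₀)
  exact ⟨n, by rw [mem_ball]; linarith⟩

variable [MeasurableSpace E] {μ : Measure E} [SFinite μ]

lemma pmeas_pball (c : ℝ × E) {ρ : ℝ} (hρ : 0 < ρ) :
    pmeas μ (pball c ρ) = ENNReal.ofReal (2 * ρ ^ 2) * μ (ball c.2 ρ) := by
  rw [pball_eq_prod c hρ, pmeas, Measure.prod_prod, Real.volume_Ioo]
  ring_nf

lemma pmeas_pball_le_two_mul_inter_Xset (c : ℝ × E) (hc : 0 ≤ c.1) {ρ : ℝ} (hρ : 0 < ρ) :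
    pmeas μ (pball c ρ) ≤ ENNReal.ofReal 2 * pmeas μ (pball c ρ ∩ Xset E) := by
  have hsub : Ioo c.1 (c.1 + ρ ^ 2) ×ˢ ball c.2 ρ ⊆ pball c ρ ∩ Xset E := by
    rw [pball_eq_prod c hρ]
    rintro p ⟨⟨h1, h2⟩, h3⟩
    exact ⟨⟨⟨by nlinarith, h2⟩, h3⟩, show 0 < p.1 by linarith⟩
  calc pmeas μ (pball c ρ)
      = ENNReal.ofReal 2 * pmeas μ (Ioo c.1 (c.1 + ρ ^ 2) ×ˢ ball c.2 ρ) := by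
        rw [pmeas_pball c hρ, pmeas, Measure.prod_prod, Real.volume_Ioo, ← mul_assoc,
          ← ENNReal.ofReal_mul zero_le_two]
        ring_nf
    _ ≤ ENNReal.ofReal 2 * pmeas μ (pball c ρ ∩ Xset E) := by gcongr

lemma DoublingWith.pmeas_pball_two_mul_le {C_D : ℝ} (hD : DoublingWith μ C_D) (c : ℝ × E)
    {ρ : ℝ} (hρ : 0 < ρ) :
    pmeas μ (pball c (2 * ρ)) ≤ ENNReal.ofReal (4 * C_D) * pmeas μ (pball c ρ) := by
  rw [pmeas_pball c (by positivity), pmeas_pball c hρ]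
  calc ENNReal.ofReal (2 * (2 * ρ) ^ 2) * μ (ball c.2 (2 * ρ))
      ≤ ENNReal.ofReal (4 * (2 * ρ ^ 2)) * (ENNReal.ofReal C_D * μ (ball c.2 ρ)) :=
        mul_le_mul' (le_of_eq (by ring_nf)) (hD.2 c.2 ρ hρ)
    _ = ENNReal.ofReal (4 * C_D) * (ENNReal.ofReal (2 * ρ ^ 2) * μ (ball c.2 ρ)) := by
        rw [ENNReal.ofReal_mul zero_le_four, ENNReal.ofReal_mul zero_le_four]
        ring

lemma DoublingWith.pmeas_pball_ne_top {C_D : ℝ} (hD : DoublingWith μ C_D) (c : ℝ × E)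
    {ρ : ℝ} (hρ : 0 < ρ) : pmeas μ (pball c ρ) ≠ ∞ := by
  rw [pmeas_pball c hρ]
  exact ENNReal.mul_ne_top ENNReal.ofReal_ne_top (hD.1 c.2 ρ hρ).2.ne

lemma DoublingWith.rpow_neg_half_pball_le {C_D : ℝ} (hD : DoublingWith μ C_D) (hCD : 0 < C_D)
    (c : ℝ × E) {ρ : ℝ} (hρ : 0 < ρ) :
    pmeas μ (pball c ρ) ^ (-(1:ℝ)/2) ≤
      ENNReal.ofReal √(4 * C_D) * pmeas μ (pball c (2 * ρ)) ^ (-(1:ℝ)/2) :=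
  rpow_neg_half_le_of_le_mul (by positivity) (hD.pmeas_pball_two_mul_le c hρ)

end ParabolicBalls

section Annuli

variable {E : Type*} [MetricSpace E] (c : ℝ × E) (r : ℝ)

-- `2^{k+1}Q ∩ X`, but empty at `k = 0`, so that the telescoping sum of the atoms starts at `0`.
def capBall : ℕ → Set (ℝ × E)
  | 0 => ∅
  | k + 1 => pball c (2 ^ (k + 2) * r) ∩ Xset E

lemma capBall_subset_Xset : ∀ k, capBall c r k ⊆ Xset E
  | 0 => empty_subset _
  | _ + 1 => inter_subset_right

lemma capBall_succ_sdiff (k : ℕ) : capBall c r (k + 1) \ capBall c r k = molBall c r (k + 1) := by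
  cases k with
  | zero => norm_num [capBall, molBall]
  | succ k =>
    rw [molBall, if_neg (by omega), capBall, capBall, inter_sdiff_distrib_right]

lemma capBall_subset_pball : ∀ k, capBall c r k ⊆ pball c (2 ^ (k + 1) * r)
  | 0 => empty_subset _
  | _ + 1 => inter_subset_left

lemma molBall_subset_capBall (k : ℕ) : molBall c r (k + 1) ⊆ capBall c r (k + 1) := by
  rw [← capBall_succ_sdiff]
  exact sdiff_subset

variable {c r}

lemma monotone_capBall (hr : 0 ≤ r) : Monotone (capBall c r) := by
  refine monotone_nat_of_le_succ fun k => ?_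
  cases k with
  | zero => exact empty_subset _
  | succ k =>
    refine inter_subset_inter_left _ (pball_mono c ?_)
    gcongr <;> norm_num

lemma measurableSet_capBall [MeasurableSpace E] [OpensMeasurableSpace E] (hr : 0 < r) :
    ∀ k, MeasurableSet (capBall c r k)
  | 0 => MeasurableSet.empty
  | k + 1 => (measurableSet_pball c (by positivity)).inter measurableSet_Xset

lemma exists_mem_capBall (hr : 0 < r) {p : ℝ × E} (hp : p ∈ Xset E) :
    ∃ k, p ∈ capBall c r k := by
  obtain ⟨n, hn⟩ := pow_unbounded_of_one_lt (pdist p c / r) one_lt_two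
  refine ⟨n + 1, lt_of_lt_of_le ((div_lt_iff₀ hr).1 hn) ?_, hp⟩
  gcongr <;> norm_num

lemma Xset_sdiff_capBall_subset (hr : 0 < r) (k : ℕ) :
    Xset E \ capBall c r k ⊆ ⋃ n, molBall c r (k + n + 1) := by
  rintro p ⟨hpX, hpk⟩
  obtain ⟨n, hn⟩ := exists_mem_capBall hr hpX
  obtain ⟨j, hkj, hj⟩ := (monotone_capBall hr.le).exists_mem_succ_sdiff hn hpk
  rw [capBall_succ_sdiff] at hj
  exact mem_iUnion.2 ⟨j - k, by rwa [Nat.add_sub_cancel' hkj]⟩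

end Annuli

section Atoms

variable {E : Type*} [MetricSpace E] [MeasurableSpace E] {μ : Measure E}

lemma isAtom12_inv_smul {a : ℝ × E → ℝ} {c : ℝ × E} {ρ K : ℝ} (hρ : 0 < ρ) (hK : 0 < K)
    (hsupp : Function.support a ⊆ pball c ρ) (hint : Integrable a (pmeas μ))
    (hmean : ∫ p, a p ∂(pmeas μ) = 0)
    (hL2 : eLpNorm a 2 (pmeas μ) ≤ ENNReal.ofReal K * pmeas μ (pball c ρ) ^ (-(1:ℝ)/2)) :
    IsAtom12 μ (K⁻¹ • a) := by
  refine ⟨c, ρ, hρ, (Function.support_const_smul_subset _ _).trans hsupp, hint.smul _,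
    by simp only [Pi.smul_apply, integral_smul, hmean, smul_zero], ?_⟩
  rw [eLpNorm_const_smul, ← ofReal_norm, Real.norm_eq_abs, abs_inv, abs_of_pos hK,
    ENNReal.ofReal_inv_of_pos hK]
  calc (ENNReal.ofReal K)⁻¹ * eLpNorm a 2 (pmeas μ)
      ≤ (ENNReal.ofReal K)⁻¹ * (ENNReal.ofReal K * pmeas μ (pball c ρ) ^ (-(1:ℝ)/2)) := by
        gcongr
    _ = pmeas μ (pball c ρ) ^ (-(1:ℝ)/2) := by
      rw [← mul_assoc, ENNReal.inv_mul_cancel (by simpa using hK) ENNReal.ofReal_ne_top, one_mul]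

lemma H1norm_le_tsum {f : ℝ × E → ℝ} {lam : ℕ → ℝ} {a : ℕ → ℝ × E → ℝ}
    (ha : ∀ i, IsAtom12 μ (a i)) (hdec : HasL1Decomp (pmeas μ) f lam a) :
    H1norm μ f ≤ ∑' i, |lam i| :=
  csInf_le ⟨0, by rintro _ ⟨lam', a', -, -, rfl⟩; exact tsum_nonneg fun i => abs_nonneg _⟩
    ⟨lam, a, ha, hdec, rfl⟩

end Atoms

def decayRatio (α : ℝ) : ℝ := 2 ^ (-α)

-- One summand per term of `eLpNorm_centeredIndicator_sub_le`; the factors `√2` and `√(4 * C_D)`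
-- come from `ν(2^jQ) ≤ 2 ν(2^jQ ∩ X)` and from doubling.
def atomCoeff (α C_D : ℝ) (k : ℕ) : ℝ :=
  √2 * (1 + (1 + √(4 * C_D)) / (1 - decayRatio α)) * decayRatio α ^ (k + 1)

section Coefficients

variable {α : ℝ}

lemma decayRatio_pos (α : ℝ) : 0 < decayRatio α := Real.rpow_pos_of_pos two_pos _

lemma decayRatio_lt_one (hα : 0 < α) : decayRatio α < 1 :=
  Real.rpow_lt_one_of_one_lt_of_neg one_lt_two (neg_lt_zero.2 hα)

lemma two_rpow_neg_natCast_mul (α : ℝ) (j : ℕ) :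
    (2:ℝ) ^ (-(j:ℝ) * α) = decayRatio α ^ j := by
  rw [decayRatio, ← Real.rpow_natCast, ← Real.rpow_mul zero_le_two, neg_mul, mul_comm, neg_mul]

lemma atomCoeff_pos (hα : 0 < α) (C_D : ℝ) (k : ℕ) : 0 < atomCoeff α C_D k := by
  have := sub_pos.2 (decayRatio_lt_one hα)
  have := decayRatio_pos α
  unfold atomCoeff
  positivity

lemma summable_atomCoeff (hα : 0 < α) (C_D : ℝ) : Summable (atomCoeff α C_D) := by
  have hgeom := summable_geometric_of_lt_one (decayRatio_pos α).le (decayRatio_lt_one hα)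
  exact ((summable_nat_add_iff 1).2 hgeom).mul_left _

end Coefficients

def moleculeAtom {E : Type*} [MetricSpace E] [MeasurableSpace E] (μ : Measure E) (α C_D : ℝ)
    (c : ℝ × E) (r : ℝ) (m : ℝ × E → ℝ) (k : ℕ) : ℝ × E → ℝ :=
  (atomCoeff α C_D k)⁻¹ • (centeredIndicator (pmeas μ) (capBall c r (k + 1)) m -
    centeredIndicator (pmeas μ) (capBall c r k) m)

namespace IsMolecule

variable {E : Type*} [MetricSpace E] [MeasurableSpace E] {μ : Measure E} {α C_D r : ℝ}
  {c : ℝ × E} {m : ℝ × E → ℝ}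

lemma fst_center_pos (hmol : IsMolecule μ α c r m) : 0 < c.1 :=
  hmol.2.1 (mem_pball_self c hmol.1)

lemma eLpNorm_molBall_le (hmol : IsMolecule μ α c r m) (k : ℕ) :
    eLpNorm m 2 ((pmeas μ).restrict (molBall c r (k + 1))) ≤
      ENNReal.ofReal (decayRatio α ^ (k + 1)) * pmeas μ (capBall c r (k + 1)) ^ (-(1:ℝ)/2) := by
  have h := hmol.2.2.2.2 (k + 1) le_add_self
  rw [two_rpow_neg_natCast_mul] at h
  exact h

lemma lintegral_molBall_le (hmol : IsMolecule μ α c r m) (k : ℕ) :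
    ∫⁻ p in molBall c r (k + 1), ‖m p‖ₑ ∂(pmeas μ) ≤
      ENNReal.ofReal (decayRatio α ^ (k + 1)) := by
  have hB := molBall_subset_capBall c r k
  have hm : AEStronglyMeasurable m ((pmeas μ).restrict (molBall c r (k + 1))) :=
    (hmol.2.2.1.mono_set (hB.trans (capBall_subset_Xset c r _))).aestronglyMeasurable
  have hHolder := eLpNorm_le_eLpNorm_mul_rpow_measure_univ (p := 1) (q := 2) one_le_two hm
  rw [eLpNorm_one_eq_lintegral_enorm, Measure.restrict_apply_univ,
    show 1 / (1 : ℝ≥0∞).toReal - 1 / (2 : ℝ≥0∞).toReal = (1:ℝ)/2 by norm_num] at hHolder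
  refine hHolder.trans ?_
  calc eLpNorm m 2 ((pmeas μ).restrict (molBall c r (k + 1))) *
        pmeas μ (molBall c r (k + 1)) ^ ((1:ℝ)/2)
      ≤ ENNReal.ofReal (decayRatio α ^ (k + 1)) * pmeas μ (capBall c r (k + 1)) ^ (-(1:ℝ)/2) *
          pmeas μ (capBall c r (k + 1)) ^ ((1:ℝ)/2) := by
        gcongr
        exact hmol.eLpNorm_molBall_le k
    _ ≤ ENNReal.ofReal (decayRatio α ^ (k + 1)) := by
        rw [mul_assoc]
        exact mul_le_of_le_one_right' (rpow_neg_half_mul_rpow_half_le_one _)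

lemma lintegral_Xset_sdiff_capBall_le (hmol : IsMolecule μ α c r m) (hα : 0 < α) (k : ℕ) :
    ∫⁻ p in Xset E \ capBall c r k, ‖m p‖ₑ ∂(pmeas μ) ≤
      ENNReal.ofReal (decayRatio α ^ (k + 1) / (1 - decayRatio α)) := by
  calc ∫⁻ p in Xset E \ capBall c r k, ‖m p‖ₑ ∂(pmeas μ)
      ≤ ∫⁻ p in ⋃ n, molBall c r (k + n + 1), ‖m p‖ₑ ∂(pmeas μ) :=
        lintegral_mono_set (Xset_sdiff_capBall_subset hmol.1 k)
    _ ≤ ∑' n, ∫⁻ p in molBall c r (k + n + 1), ‖m p‖ₑ ∂(pmeas μ) :=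
        lintegral_iUnion_le _ _
    _ ≤ ∑' n, ENNReal.ofReal (decayRatio α ^ (k + 1 + n)) :=
        ENNReal.tsum_le_tsum fun n => by
          simpa only [add_right_comm k n 1] using hmol.lintegral_molBall_le (k + n)
    _ = _ := tsum_ofReal_geometric_tail (decayRatio_pos α).le (decayRatio_lt_one hα) _

lemma enorm_setIntegral_capBall_le [OpensMeasurableSpace E] (hmol : IsMolecule μ α c r m)
    (hα : 0 < α) (k : ℕ) :
    ‖∫ p in capBall c r k, m p ∂(pmeas μ)‖ₑ ≤
      ENNReal.ofReal (decayRatio α ^ (k + 1) / (1 - decayRatio α)) :=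
  (enorm_setIntegral_le_of_setIntegral_eq_zero (measurableSet_capBall hmol.1 k)
    (capBall_subset_Xset c r k) hmol.2.2.1 hmol.2.2.2.1).trans
    (hmol.lintegral_Xset_sdiff_capBall_le hα k)

lemma tendsto_eLpNorm_sub_centeredIndicator [OpensMeasurableSpace E]
    (hmol : IsMolecule μ α c r m) (hα : 0 < α) :
    Tendsto (fun k => eLpNorm ((Xset E).indicator m -
      centeredIndicator (pmeas μ) (capBall c r k) m) 1 (pmeas μ)) atTop (nhds 0) := by
  have hq : Tendsto (fun k : ℕ => ENNReal.ofReal (decayRatio α ^ (k + 1) / (1 - decayRatio α)))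
      atTop (nhds 0) := by
    have := ((tendsto_pow_atTop_nhds_zero_of_lt_one (decayRatio_pos α).le
      (decayRatio_lt_one hα)).comp (tendsto_add_atTop_nat 1)).div_const (1 - decayRatio α)
    simpa using ENNReal.tendsto_ofReal this
  have h2 := ENNReal.Tendsto.const_mul hq (Or.inr (ENNReal.ofNat_ne_top (n := 2)))
  rw [mul_zero] at h2
  refine tendsto_of_tendsto_of_tendsto_of_le_of_le tendsto_const_nhds h2 (fun _ => zero_le)
    fun k => ?_
  refine (eLpNorm_indicator_sub_centeredIndicator_le (measurableSet_capBall hmol.1 k)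
    measurableSet_Xset (capBall_subset_Xset c r k) hmol.2.2.1 hmol.2.2.2.1).trans ?_
  gcongr
  exact hmol.lintegral_Xset_sdiff_capBall_le hα k

lemma rpow_neg_half_capBall_le [SFinite μ] (hmol : IsMolecule μ α c r m) (k : ℕ) :
    pmeas μ (capBall c r (k + 1)) ^ (-(1:ℝ)/2) ≤
      ENNReal.ofReal √2 * pmeas μ (pball c (2 ^ (k + 2) * r)) ^ (-(1:ℝ)/2) :=
  rpow_neg_half_le_of_le_mul two_pos (pmeas_pball_le_two_mul_inter_Xset c
    hmol.fst_center_pos.le (mul_pos (pow_pos two_pos _) hmol.1))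

lemma enorm_setIntegral_mul_rpow_le [OpensMeasurableSpace E] [SFinite μ]
    (hmol : IsMolecule μ α c r m) (hα : 0 < α) (k : ℕ) :
    ‖∫ p in capBall c r k, m p ∂(pmeas μ)‖ₑ * pmeas μ (capBall c r k) ^ (-(1:ℝ)/2) ≤
      ENNReal.ofReal (√2 * (decayRatio α ^ (k + 1) / (1 - decayRatio α))) *
        pmeas μ (pball c (2 ^ (k + 1) * r)) ^ (-(1:ℝ)/2) := by
  cases k with
  | zero => simp [capBall]
  | succ k =>
    rw [ENNReal.ofReal_mul (Real.sqrt_nonneg 2), mul_comm (ENNReal.ofReal √2), mul_assoc]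
    exact mul_le_mul' (hmol.enorm_setIntegral_capBall_le hα _) (hmol.rpow_neg_half_capBall_le k)

lemma eLpNorm_centeredIndicator_succ_sub_le [OpensMeasurableSpace E] [SFinite μ]
    (hmol : IsMolecule μ α c r m) (hα : 0 < α) (hD : DoublingWith μ C_D) (hCD : 0 < C_D)
    (k : ℕ) :
    eLpNorm (centeredIndicator (pmeas μ) (capBall c r (k + 1)) m -
        centeredIndicator (pmeas μ) (capBall c r k) m) 2 (pmeas μ) ≤
      ENNReal.ofReal (atomCoeff α C_D k) * pmeas μ (pball c (2 ^ (k + 2) * r)) ^ (-(1:ℝ)/2) := by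
  set q := decayRatio α
  have hq0 : 0 ≤ q := (decayRatio_pos α).le
  have hq1 : 0 < 1 - q := sub_pos.2 (decayRatio_lt_one hα)
  set M := pmeas μ (pball c (2 ^ (k + 2) * r)) ^ (-(1:ℝ)/2)
  have hshell : eLpNorm m 2 ((pmeas μ).restrict (capBall c r (k + 1) \ capBall c r k)) ≤
      ENNReal.ofReal (√2 * q ^ (k + 1)) * M := by
    rw [capBall_succ_sdiff, ENNReal.ofReal_mul (Real.sqrt_nonneg 2), mul_comm (ENNReal.ofReal √2),
      mul_assoc]
    exact (hmol.eLpNorm_molBall_le k).trans (by gcongr; exact hmol.rpow_neg_half_capBall_le k)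
  have houter := hmol.enorm_setIntegral_mul_rpow_le hα (k + 1)
  have hinner : ‖∫ p in capBall c r k, m p ∂(pmeas μ)‖ₑ * pmeas μ (capBall c r k) ^ (-(1:ℝ)/2) ≤
      ENNReal.ofReal (√2 * (q ^ (k + 1) / (1 - q)) * √(4 * C_D)) * M := by
    refine (hmol.enorm_setIntegral_mul_rpow_le hα k).trans ?_
    rw [ENNReal.ofReal_mul (p := √2 * (q ^ (k + 1) / (1 - q))) (by positivity), mul_assoc]
    have hdoubling := hD.rpow_neg_half_pball_le hCD c (mul_pos (pow_pos two_pos (k + 1)) hmol.1)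
    rw [show (2:ℝ) * (2 ^ (k + 1) * r) = 2 ^ (k + 2) * r by ring] at hdoubling
    gcongr
  have hq : q ^ (k + 2) / (1 - q) ≤ q ^ (k + 1) / (1 - q) :=
    div_le_div_of_nonneg_right (pow_le_pow_of_le_one hq0 (decayRatio_lt_one hα).le
      (Nat.le_succ _)) hq1.le
  refine (eLpNorm_centeredIndicator_sub_le (measurableSet_capBall hmol.1 k)
    (measurableSet_capBall hmol.1 (k + 1)) (monotone_capBall hmol.1.le (Nat.le_succ k))
    (hmol.2.2.1.mono_set (capBall_subset_Xset c r _))).trans ?_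
  calc _ ≤ ENNReal.ofReal (√2 * q ^ (k + 1)) * M +
        ENNReal.ofReal (√2 * (q ^ (k + 2) / (1 - q))) * M +
        ENNReal.ofReal (√2 * (q ^ (k + 1) / (1 - q)) * √(4 * C_D)) * M :=
        add_le_add (add_le_add hshell houter) hinner
    _ = ENNReal.ofReal (√2 * q ^ (k + 1) + √2 * (q ^ (k + 2) / (1 - q)) +
          √2 * (q ^ (k + 1) / (1 - q)) * √(4 * C_D)) * M := by
        rw [ENNReal.ofReal_add (by positivity) (by positivity),
          ENNReal.ofReal_add (by positivity) (by positivity), add_mul, add_mul]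
    _ ≤ ENNReal.ofReal (atomCoeff α C_D k) * M := by
        gcongr
        calc _ ≤ √2 * q ^ (k + 1) + √2 * (q ^ (k + 1) / (1 - q)) +
              √2 * (q ^ (k + 1) / (1 - q)) * √(4 * C_D) := by gcongr
          _ = atomCoeff α C_D k := by unfold atomCoeff; ring

lemma isAtom12_moleculeAtom [OpensMeasurableSpace E] [SFinite μ]
    (hmol : IsMolecule μ α c r m) (hα : 0 < α) (hD : DoublingWith μ C_D) (hCD : 0 < C_D)
    (k : ℕ) : IsAtom12 μ (moleculeAtom μ α C_D c r m k) := by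
  have hS := measurableSet_capBall (c := c) hmol.1
  have hfin : ∀ j, pmeas μ (capBall c r j) ≠ ∞ := fun j =>
    ne_top_of_le_ne_top (hD.pmeas_pball_ne_top c (mul_pos (pow_pos two_pos _) hmol.1))
      (measure_mono (capBall_subset_pball c r j))
  have hint : ∀ j, Integrable (centeredIndicator (pmeas μ) (capBall c r j) m) (pmeas μ) :=
    fun j => integrable_centeredIndicator (hS j) (hfin j)
      (hmol.2.2.1.mono_set (capBall_subset_Xset c r j))
  have hmono := monotone_capBall (c := c) hmol.1.le (Nat.le_succ k)
  refine isAtom12_inv_smul (mul_pos (pow_pos two_pos _) hmol.1) (atomCoeff_pos hα C_D k) ?_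
    ((hint _).sub (hint _)) ?_ (hmol.eLpNorm_centeredIndicator_succ_sub_le hα hD hCD k)
  · refine (Function.support_sub _ _).trans (union_subset ?_ ?_) <;>
      refine support_centeredIndicator_subset.trans ?_
    · exact capBall_subset_pball c r (k + 1)
    · exact hmono.trans (capBall_subset_pball c r (k + 1))
  · rw [integral_sub' (hint _) (hint _), integral_centeredIndicator (hS _) (hfin _),
      integral_centeredIndicator (hS _) (hfin _), sub_zero]

lemma hasL1Decomp_moleculeAtom [OpensMeasurableSpace E] (hmol : IsMolecule μ α c r m)
    (hα : 0 < α) (C_D : ℝ) :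
    HasL1Decomp (pmeas μ) ((Xset E).indicator m) (atomCoeff α C_D)
      (moleculeAtom μ α C_D c r m) := by
  have hcoeff := atomCoeff_pos hα C_D
  refine ⟨by simpa only [abs_of_pos (hcoeff _)] using summable_atomCoeff hα C_D, ?_⟩
  have hpartial : ∀ k p, ∑ i ∈ Finset.range k, atomCoeff α C_D i * moleculeAtom μ α C_D c r m i p =
      centeredIndicator (pmeas μ) (capBall c r k) m p := by
    intro k p
    simp_rw [moleculeAtom, Pi.smul_apply, smul_eq_mul, ← mul_assoc,
      mul_inv_cancel₀ (hcoeff _).ne', one_mul, Pi.sub_apply]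
    rw [Finset.sum_range_sub (fun i => centeredIndicator (pmeas μ) (capBall c r i) m p)]
    simp [capBall, centeredIndicator]
  simp_rw [hpartial]
  exact hmol.tendsto_eLpNorm_sub_centeredIndicator hα

end IsMolecule

/-- molecules form a bounded subset of `H¹_z(X)`: for every `α > 0` there is a
constant `C` depending only on `α` and the doubling constant `C_D` such that every molecule
with parameter `α` associated to a ball `Q ⊆ X` lies in `H¹_z(X)` with norm at most `C`. -/
theorem stmt6 (α : ℝ) (hα : 0 < α) (C_D : ℝ) (hCD : 1 ≤ C_D) :
    ∃ C : ℝ, 0 < C ∧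
      ∀ (E : Type) (_ : MetricSpace E) (_ : MeasurableSpace E), BorelSpace E →
        ∀ μ : Measure E, DoublingWith μ C_D →
          ∀ (m : ℝ × E → ℝ) (c : ℝ × E) (r : ℝ), IsMolecule μ α c r m →
            MemH1z μ m ∧ H1znorm μ m ≤ C := by
  have hcoeff := atomCoeff_pos hα C_D
  refine ⟨∑' k, atomCoeff α C_D k,
    (summable_atomCoeff hα C_D).tsum_pos (fun k => (hcoeff k).le) 0 (hcoeff 0), ?_⟩
  intro E _ _ _ μ hD m c r hmol
  have := hD.sigmaFinite c.2
  have hdec := hmol.hasL1Decomp_moleculeAtom hα C_D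
  have hatoms := hmol.isAtom12_moleculeAtom hα hD (by linarith)
  have hint := hmol.2.2.1.integrable_indicator measurableSet_Xset
  refine ⟨⟨hmol.2.2.1, hint, _, _, hatoms, hdec⟩, ?_⟩
  calc H1znorm μ m ≤ ∑' k, |atomCoeff α C_D k| := H1norm_le_tsum hatoms hdec
    _ = ∑' k, atomCoeff α C_D k := by simp_rw [abs_of_pos (hcoeff _)]
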